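/- If the KKT matrix K = [[P_uu, F_u^T],[F_u, 0]] satisfies the range condition range(K) ⊇ range([[P_ux V_2, P_ux x_0 + q_u],[F_x V_2, F_x x_0 + g]]), then for every z ∈ R^l the linear system K [u; ν] = −[P_ux; F_x](x_0 + V_2 z) − [q_u; g] has a solution, and u*(x) = −[I 0] K^† ([P_ux; F_x] x + [q_u; g]) satisfies F_x x + F_u u*(x) + g = 0 for all x = x_0 + V_2 z. -/
import Mathlib


open Matrix

/-- `Ad` is the Moore–Penrose pseudo-inverse of `A`. -/
def IsMoorePenrose {α β : Type} [Fintype α] [Fintype β] (A : Matrix α β ℝ)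
    (Ad : Matrix β α ℝ) : Prop :=
  A * Ad * A = A ∧ Ad * A * Ad = Ad ∧ (A * Ad).transpose = A * Ad ∧
    (Ad * A).transpose = Ad * A

/-- under the range condition
`range(K) ⊇ range([[Pᵤₓ V₂, Pᵤₓ x₀ + qᵤ], [Fₓ V₂, Fₓ x₀ + g]])` for the KKT matrix
`K = [[Pᵤᵤ, Fᵤᵀ], [Fᵤ, 0]]`, the KKT linear system is solvable for every `z`, and
`u*(x) = −[I 0] K† ([Pᵤₓ; Fₓ] x + [qᵤ; g])` satisfies `Fₓ x + Fᵤ u*(x) + g = 0`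
for every `x = x₀ + V₂ z`. -/
theorem kkt_range_condition_solvable {n m p l : ℕ}
    (Puu : Matrix (Fin m) (Fin m) ℝ) (hPuu : Puu.IsSymm)
    (Pux : Matrix (Fin m) (Fin n) ℝ) (qu : Fin m → ℝ)
    (Fx : Matrix (Fin p) (Fin n) ℝ) (Fu : Matrix (Fin p) (Fin m) ℝ) (g : Fin p → ℝ)
    (Fud : Matrix (Fin m) (Fin p) ℝ) (hFud : IsMoorePenrose Fu Fud)
    (x₀ : Fin n → ℝ) (V₂ : Matrix (Fin n) (Fin l) ℝ)
    (hx₀ : (1 - Fu * Fud).mulVec (Fx.mulVec x₀ + g) = 0)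
    (hV₂ : ∀ x, (1 - Fu * Fud).mulVec (Fx.mulVec x + g) = 0 ↔
      ∃ z, x = x₀ + V₂.mulVec z)
    (K : Matrix (Fin m ⊕ Fin p) (Fin m ⊕ Fin p) ℝ)
    (hK : K = Matrix.fromBlocks Puu Fu.transpose Fu 0)
    (Kd : Matrix (Fin m ⊕ Fin p) (Fin m ⊕ Fin p) ℝ) (hKd : IsMoorePenrose K Kd)
    (hrange : LinearMap.range
        (Matrix.fromBlocks (Pux * V₂) (Matrix.of fun i (_ : Unit) => (Pux.mulVec x₀ + qu) i)
          (Fx * V₂) (Matrix.of fun i (_ : Unit) => (Fx.mulVec x₀ + g) i)).mulVecLin ≤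
      LinearMap.range K.mulVecLin) :
    (∀ z : Fin l → ℝ,
      ∃ w : Fin m ⊕ Fin p → ℝ,
        K.mulVec w =
          -(Sum.elim (Pux.mulVec (x₀ + V₂.mulVec z) + qu)
              (Fx.mulVec (x₀ + V₂.mulVec z) + g))) ∧
    (∀ z : Fin l → ℝ,
      Fx.mulVec (x₀ + V₂.mulVec z) +
        Fu.mulVec (fun i =>
          -(Kd.mulVec (Sum.elim (Pux.mulVec (x₀ + V₂.mulVec z) + qu)
              (Fx.mulVec (x₀ + V₂.mulVec z) + g))) (Sum.inl i)) + g = 0) := by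
  obtain ⟨hK1, hK2, hK3, hK4⟩ := hKd
  set b : (Fin l → ℝ) → (Fin m ⊕ Fin p → ℝ) := fun z =>
    Sum.elim (Pux.mulVec (x₀ + V₂.mulVec z) + qu) (Fx.mulVec (x₀ + V₂.mulVec z) + g) with hb
  have hmem : ∀ z, ∃ w, K.mulVec w = b z := by
    intro z
    have : b z ∈ LinearMap.range K.mulVecLin := by
      apply hrange
      refine ⟨Sum.elim z (fun _ => 1), ?_⟩
      rw [Matrix.mulVecLin_apply, Matrix.fromBlocks_mulVec]
      funext i
      cases i <;>
        simp [hb, Matrix.mulVec_add, Matrix.mulVec, dotProduct, Matrix.mul_apply,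
          Finset.sum_mul, Finset.mul_sum, mul_comm, Finset.sum_comm (γ := Fin n)] <;>
        ring_nf <;>
        rw [Finset.sum_comm]
    exact this
  have hsolve : ∀ z, K.mulVec (Kd.mulVec (b z)) = b z := by
    intro z
    obtain ⟨w, hw⟩ := hmem z
    rw [← hw, Matrix.mulVec_mulVec, Matrix.mulVec_mulVec, hK1]
  constructor
  · intro z
    exact ⟨-(Kd.mulVec (b z)), by rw [Matrix.mulVec_neg, hsolve]⟩
  · intro z
    have h2 : (K.mulVec (Kd.mulVec (b z))) ∘ Sum.inr = (b z) ∘ Sum.inr := by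
      rw [hsolve]
    have hKv : K.mulVec (Kd.mulVec (b z)) ∘ Sum.inr
        = Fu.mulVec ((Kd.mulVec (b z)) ∘ Sum.inl) := by
      rw [hK, Matrix.fromBlocks_mulVec]
      simp
    have key : Fu.mulVec (Kd.mulVec (b z) ∘ Sum.inl)
        = Fx.mulVec (x₀ + V₂.mulVec z) + g := by
      rw [← hKv, h2]; rfl
    have : Fu.mulVec (fun i => -(Kd.mulVec (b z)) (Sum.inl i))
        = -(Fx.mulVec (x₀ + V₂.mulVec z) + g) := by
      rw [← key, ← Matrix.mulVec_neg]; rfl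
    rw [this]; abel
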